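/- Let q < 0, μ > 0, p > 0, and -½q² < E < 0. Define Q(x) = ((p+2)|E|/(2μ))^{1/p} · sinh^{-2/p}( p√(|E|/2)|x| + arctanh(√(2|E|)/|q|) ). Then Q satisfies -½Q''(x) + μ Q(x)^{p+1} = E Q(x) for all x > 0, and Q'(0+) = q Q(0). -/

import Mathlib

/-!
For `x ≥ 0` we have `Q x = K · u (a x + b)` with `u = sinh ^ r`, `r = -2/p`, `a = p √(|E|/2)`,
`b = artanh (√(2|E|)/|q|)` and `K ^ p = (p+2)|E|/(2μ)`. Because `cosh² = 1 + sinh²`,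
`u'' = r² u + r (r - 1) sinh ^ (r - 2)`, and `sinh ^ (r - 2) = u ^ (p + 1)` exactly for `r = -2/p`;
the affine change of variables multiplies second derivatives by `a²`, and the choice of `a` and `K`
turns this into `Q'' = 2|E| Q + 2μ Q ^ (p + 1)`, which is the equation. At the origin
`Q'/Q = r a / tanh b = -√(2|E|) · |q| / √(2|E|) = q`.
-/

/-- Inverse hyperbolic tangent. -/
noncomputable def arctanh (x : ℝ) : ℝ := (1/2) * Real.log ((1 + x) / (1 - x))

open Real Set Filter Topology

lemma arctanh_eq_artanh {t : ℝ} (ht : t ∈ Icc (-1) 1) : arctanh t = artanh t := by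
  rw [artanh_eq_half_log ht, arctanh]

lemma sqrt_two_mul_eq (x : ℝ) : √(2 * x) = 2 * √(x / 2) := by
  rw [show 2 * x = 2 ^ 2 * (x / 2) by ring, sqrt_mul (by positivity), sqrt_sq zero_le_two]

lemma sqrt_two_mul_abs_div_abs_mem_Ioo {q E : ℝ} (hE : E ≠ 0) (h : 2 * |E| < q ^ 2) :
    √(2 * |E|) / |q| ∈ Ioo 0 1 := by
  have hq : 0 < |q| := abs_pos.mpr (by rintro rfl; linarith [abs_nonneg E])
  refine ⟨div_pos (sqrt_pos.mpr (by positivity)) hq, ?_⟩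
  rwa [div_lt_one hq, sqrt_lt' hq, sq_abs]

lemma deriv_deriv_const_mul_comp_affine (u : ℝ → ℝ) (K a b x : ℝ) :
    deriv (deriv fun y => K * u (a * y + b)) x = K * a ^ 2 * deriv (deriv u) (a * x + b) := by
  have hcomp : ∀ v : ℝ → ℝ, deriv (fun y => v (a * y + b)) = fun y => a * deriv v (a * y + b) := by
    intro v
    funext y
    rw [deriv_comp_mul_left a (fun z => v (z + b)) y, deriv_comp_add_const, smul_eq_mul]
  rw [deriv_const_mul_field', hcomp, deriv_const_mul_field, deriv_const_mul_field, hcomp]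
  ring

lemma hasDerivAt_sinh_rpow (r : ℝ) {z : ℝ} (hz : 0 < z) :
    HasDerivAt (fun z => sinh z ^ r) (r * sinh z ^ (r - 1) * cosh z) z :=
  (hasDerivAt_rpow_const (Or.inl (sinh_pos_iff.mpr hz).ne')).comp z (hasDerivAt_sinh z)

lemma deriv_deriv_sinh_rpow (r : ℝ) {z : ℝ} (hz : 0 < z) :
    deriv (deriv fun z => sinh z ^ r) z =
      r ^ 2 * sinh z ^ r + r * (r - 1) * sinh z ^ (r - 2) := by
  have hderiv : deriv (fun z => sinh z ^ r) =ᶠ[𝓝 z] fun z => r * (sinh z ^ (r - 1) * cosh z) := by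
    filter_upwards [Ioi_mem_nhds hz] with w hw
    rw [(hasDerivAt_sinh_rpow r hw).deriv, mul_assoc]
  have hS : 0 < sinh z := sinh_pos_iff.mpr hz
  have h : HasDerivAt (fun z => r * (sinh z ^ (r - 1) * cosh z))
      (r * ((r - 1) * sinh z ^ (r - 1 - 1) * cosh z * cosh z + sinh z ^ (r - 1) * sinh z)) z :=
    ((hasDerivAt_sinh_rpow (r - 1) hz).mul (hasDerivAt_cosh z)).const_mul r
  rw [hderiv.deriv_eq, h.deriv, show r - 1 - 1 = r - 2 by ring, rpow_sub_one hS.ne', rpow_sub hS,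
    rpow_two]
  field_simp
  linear_combination r * (r - 1) * cosh_sq z

lemma hasDerivAt_sinh_rpow_comp_affine (K a b r : ℝ) {x : ℝ} (hx : 0 < a * x + b) :
    HasDerivAt (fun y => K * sinh (a * y + b) ^ r)
      (K * (r * sinh (a * x + b) ^ (r - 1) * cosh (a * x + b) * a)) x := by
  have haff : HasDerivAt (fun y => a * y + b) a x := by
    simpa using ((hasDerivAt_id x).const_mul a).add_const b
  exact ((hasDerivAt_sinh_rpow r hx).comp x haff).const_mul K

lemma hasDerivAt_sinh_rpow_comp_affine_zero (K a r : ℝ) {b : ℝ} (hb : 0 < b) :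
    HasDerivAt (fun y => K * sinh (a * y + b) ^ r) (r * a / tanh b * (K * sinh b ^ r)) 0 := by
  convert hasDerivAt_sinh_rpow_comp_affine K a b r (x := 0) (by simpa using hb) using 1
  have hS : 0 < sinh b := sinh_pos_iff.mpr hb
  rw [mul_zero, zero_add, tanh_eq_sinh_div_cosh, rpow_sub_one hS.ne']
  field_simp

lemma sinh_rpow_comp_affine_ode {μ p E K a b x : ℝ} (hp : 0 < p) (hK : 0 ≤ K)
    (ha : a ^ 2 = p ^ 2 * -E / 2) (hKp : μ * K ^ p = (p + 2) * -E / 2) (hx : 0 < a * x + b) :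
    -(1/2) * deriv (deriv fun y => K * sinh (a * y + b) ^ (-(2/p))) x
      + μ * (K * sinh (a * x + b) ^ (-(2/p))) ^ (p + 1) =
        E * (K * sinh (a * x + b) ^ (-(2/p))) := by
  rw [deriv_deriv_const_mul_comp_affine (fun z => sinh z ^ (-(2/p))), deriv_deriv_sinh_rpow _ hx]
  set S := sinh (a * x + b)
  set r := -(2/p) with hr_def
  have hS : 0 < S := sinh_pos_iff.mpr hx
  have hr : r * p = -2 := by rw [hr_def]; field_simp
  have hpow : (K * S ^ r) ^ (p + 1) = K ^ p * K * S ^ (r - 2) := by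
    rw [mul_rpow hK (rpow_nonneg hS.le _), rpow_add' hK (by positivity), rpow_one,
      ← rpow_mul hS.le]
    congr 2
    linear_combination hr
  rw [hpow]
  linear_combination -(1/2) * K * (r ^ 2 * S ^ r + r * (r - 1) * S ^ (r - 2)) * ha
    + K * S ^ (r - 2) * hKp
    + E / 4 * K * ((r * p - 2) * S ^ r + (r * p - 2 - p) * S ^ (r - 2)) * hr

/-- The explicit defocusing (`μ > 0`) nonlinear bound state
`Q(x) = ((p+2)|E|/(2μ))^{1/p} sinh^{-2/p}(p√(|E|/2)|x| + arctanh(√(2|E|)/|q|))`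
solves `-½Q'' + μ Q^{p+1} = EQ` for `x > 0` and satisfies `Q'(0+) = q Q(0)`. -/
theorem defocusing_bound_state (q μ p E : ℝ) (hq : q < 0) (hμ : 0 < μ) (hp : 0 < p)
    (hE₁ : -(1/2) * q^2 < E) (hE₂ : E < 0)
    (Q : ℝ → ℝ)
    (hQ : ∀ x, Q x = ((p + 2) * |E| / (2 * μ)) ^ (1/p) *
      (Real.sinh (p * Real.sqrt (|E| / 2) * |x| + arctanh (Real.sqrt (2 * |E|) / |q|)))
        ^ (-(2/p))) :
    (∀ x : ℝ, 0 < x → -(1/2) * deriv (deriv Q) x + μ * Q x ^ (p + 1) = E * Q x) ∧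
    HasDerivWithinAt Q (q * Q 0) (Set.Ici 0) 0 := by
  have hE : |E| = -E := abs_of_neg hE₂
  set K := ((p + 2) * |E| / (2 * μ)) ^ (1/p) with hK
  set a := p * √(|E| / 2) with ha_def
  set t := √(2 * |E|) / |q| with ht_def
  set b := arctanh t
  have ht : t ∈ Ioo 0 1 := sqrt_two_mul_abs_div_abs_mem_Ioo hE₂.ne (by rw [hE]; linarith)
  have hb : b = artanh t := arctanh_eq_artanh (Ioo_subset_Icc_self ⟨by linarith [ht.1], ht.2⟩)
  have hb_pos : 0 < b := hb ▸ artanh_pos ht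
  have hQ_eq : EqOn Q (fun y => K * sinh (a * y + b) ^ (-(2/p))) (Ici 0) := fun y hy => by
    rw [hQ, abs_of_nonneg (mem_Ici.mp hy)]
  refine ⟨fun x hx => ?_, ?_⟩
  · have ha : a ^ 2 = p ^ 2 * -E / 2 := by
      rw [mul_pow, sq_sqrt (by positivity), hE]; ring
    have hKp : μ * K ^ p = (p + 2) * -E / 2 := by
      rw [hK, one_div, rpow_inv_rpow (by positivity) hp.ne', hE]; field_simp
    rw [(hQ_eq.eventuallyEq_of_mem (Ici_mem_nhds hx)).deriv.deriv_eq, hQ_eq hx.le]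
    exact sinh_rpow_comp_affine_ode hp (by positivity) ha hKp (by positivity)
  · have hratio : -(2/p) * a / tanh b = q := by
      rw [hb, tanh_artanh (Ioo_subset_Ioo_left (by norm_num) ht), ht_def, ha_def, abs_of_neg hq,
        sqrt_two_mul_eq]
      have : 0 < √(|E| / 2) := sqrt_pos.mpr (by rw [hE]; linarith)
      field_simp
    have h := (hasDerivAt_sinh_rpow_comp_affine_zero K a (-(2/p)) hb_pos).hasDerivWithinAt
      (s := Ici 0)
    rw [hratio] at h
    have hQ0 : Q 0 = K * sinh b ^ (-(2/p)) := by simpa using hQ_eq self_mem_Ici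
    rw [hQ0]
    exact h.congr hQ_eq (hQ_eq self_mem_Ici)
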